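/- arXiv:2001.02209 — 4 statements merged into one kernel-verified Lean document; each statement's English description precedes it below -/
import Mathlib

section
/- Let n be a natural number and let g : ℝⁿ → ℝ be differentiable (Differentiable ℝ g), where ℝⁿ = EuclideanSpace ℝ (Fin n). Define h : ℝⁿ × ℝⁿ → ℝ × ℝ by h(x, v) = (g x, fderiv ℝ g x v). Then (i) for all differentiable curves f : ℝ → ℝⁿ and all t ∈ ℝ, h(f t, deriv f t) = (g (f t), deriv (fun s => g (f s)) t); and (ii) h is the unique function ℝⁿ × ℝⁿ → ℝ × ℝ with property (i): any h′ satisfying (i) for all differentiable curves f equals h. -/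
/-! The chain rule `(g ∘ f)'(t) = Dg(f t) (f'(t))` gives (i). For uniqueness, every pair `(x, v)`
is the position and velocity `(f 0, f'(0))` of the line `f s = x + s • v`, so a function of
`(f t, f'(t))` is determined by its values along differentiable curves. -/

theorem eq_of_forall_differentiable_curve {E α : Type*} [NormedAddCommGroup E] [NormedSpace ℝ E]
    {φ ψ : E × E → α}
    (h : ∀ f : ℝ → E, Differentiable ℝ f → ∀ t, φ (f t, deriv f t) = ψ (f t, deriv f t)) :
    φ = ψ := by
  funext ⟨x, v⟩
  have hline : HasDerivAt (fun s : ℝ => x + s • v) v 0 := by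
    simpa using ((hasDerivAt_id (0 : ℝ)).smul_const v).const_add x
  have := h (fun s => x + s • v) (by fun_prop) 0
  rwa [hline.deriv, zero_smul, add_zero] at this

theorem dual_numbers_representation_exists_unique (n : ℕ)
    (g : EuclideanSpace ℝ (Fin n) → ℝ) (hg : Differentiable ℝ g) :
    (∀ f : ℝ → EuclideanSpace ℝ (Fin n), Differentiable ℝ f → ∀ t : ℝ,
      (fun p : EuclideanSpace ℝ (Fin n) × EuclideanSpace ℝ (Fin n) =>
          (g p.1, fderiv ℝ g p.1 p.2)) (f t, deriv f t) =
        (g (f t), deriv (fun s => g (f s)) t)) ∧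
    (∀ h' : EuclideanSpace ℝ (Fin n) × EuclideanSpace ℝ (Fin n) → ℝ × ℝ,
      (∀ f : ℝ → EuclideanSpace ℝ (Fin n), Differentiable ℝ f → ∀ t : ℝ,
        h' (f t, deriv f t) = (g (f t), deriv (fun s => g (f s)) t)) →
      h' = fun p => (g p.1, fderiv ℝ g p.1 p.2)) := by
  have chain_rule : ∀ f : ℝ → EuclideanSpace ℝ (Fin n), Differentiable ℝ f → ∀ t : ℝ,
      deriv (fun s => g (f s)) t = fderiv ℝ g (f t) (deriv f t) :=
    fun f hf t => fderiv_comp_deriv t (hg (f t)) (hf t)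
  refine ⟨fun f hf t => by rw [chain_rule f hf t], fun h' hh' => ?_⟩
  exact eq_of_forall_differentiable_curve fun f hf t => by rw [hh' f hf t, chain_rule f hf t]
end

section
/- Let k be a natural number and let f, g : ℝᵏ → ℝ be differentiable, where ℝᵏ = EuclideanSpace ℝ (Fin k). Define Φ : (ℝ × (ℝ → ℝᵏ)) × (ℝ × (ℝ → ℝᵏ)) → ℝ × (ℝ → ℝᵏ) by Φ((x, x′), (y, y′)) = (x·y, fun z => x′(y·z) + y′(x·z)). Then for every v ∈ ℝᵏ, Φ((f v, fun y => y • gradient f v), (g v, fun y => y • gradient g v)) = ((f v)·(g v), fun y => y • gradient (fun w => f w · g w) v). -/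
/-- The continuation-based (reverse-mode) AD interpretation of multiplication:
a real is translated to a pair of a real and a continuation `ℝ → ℝᵏ`. -/
def revMul (k : ℕ)
    (p : (ℝ × (ℝ → EuclideanSpace ℝ (Fin k))) × (ℝ × (ℝ → EuclideanSpace ℝ (Fin k)))) :
    ℝ × (ℝ → EuclideanSpace ℝ (Fin k)) :=
  (p.1.1 * p.2.1, fun z => p.1.2 (p.2.1 * z) + p.2.2 (p.1.1 * z))

section

variable {F : Type*} [NormedAddCommGroup F] [InnerProductSpace ℝ F] [CompleteSpace F]
  {f g : F → ℝ} {f' g' x : F}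

theorem HasGradientAt.mul (hf : HasGradientAt f f' x) (hg : HasGradientAt g g' x) :
    HasGradientAt (fun y => f y * g y) (f x • g' + g x • f') x := by
  rw [hasGradientAt_iff_hasFDerivAt, map_add, map_smul, map_smul]
  exact hf.hasFDerivAt.mul hg.hasFDerivAt

theorem gradient_fun_mul (hf : DifferentiableAt ℝ f x) (hg : DifferentiableAt ℝ g x) :
    gradient (fun y => f y * g y) x = f x • gradient g x + g x • gradient f x :=
  (hf.hasGradientAt.mul hg.hasGradientAt).gradient

end

theorem revMul_correct (k : ℕ) (f g : EuclideanSpace ℝ (Fin k) → ℝ)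
    (hf : Differentiable ℝ f) (hg : Differentiable ℝ g) (v : EuclideanSpace ℝ (Fin k)) :
    revMul k ((f v, fun y => y • gradient f v), (g v, fun y => y • gradient g v)) =
      (f v * g v, fun y => y • gradient (fun w => f w * g w) v) := by
  rw [gradient_fun_mul (hf v) (hg v)]
  refine Prod.ext rfl (funext fun y => ?_)
  simp only [revMul]
  module
end

section
/- Let k be a natural number, let f : ℝᵏ → ℝ be differentiable (ℝᵏ = EuclideanSpace ℝ (Fin k)), and let σ : ℝ → ℝ be the sigmoid function σ(x) = 1/(1 + exp(−x)). Define Φ : (ℝ × (ℝ → ℝᵏ)) → ℝ × (ℝ → ℝᵏ) by Φ(x, x′) = (σ x, fun z => x′(σ x · (1 − σ x) · z)). Then for every v ∈ ℝᵏ, Φ(f v, fun y => y • gradient f v) = (σ (f v), fun y => y • gradient (fun w => σ (f w)) v). -/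
/-- The sigmoid function `σ(x) = 1 / (1 + e^{-x})`. -/
noncomputable def sigmoid (x : ℝ) : ℝ := 1 / (1 + Real.exp (-x))

/-- The continuation-based (reverse-mode) AD interpretation of the sigmoid:
a real is translated to a pair of a real and a continuation `ℝ → ℝᵏ`. -/
noncomputable def revSigmoid (k : ℕ) (p : ℝ × (ℝ → EuclideanSpace ℝ (Fin k))) :
    ℝ × (ℝ → EuclideanSpace ℝ (Fin k)) :=
  (sigmoid p.1, fun z => p.2 (sigmoid p.1 * (1 - sigmoid p.1) * z))

/-! The continuation of `revSigmoid` multiplies by `σ' = σ (1 - σ)`, so the claim is the chain rule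
`∇ (σ ∘ f) v = σ'(f v) • ∇ f v` for gradients. -/

lemma sigmoid_eq_real_sigmoid : sigmoid = Real.sigmoid := by
  funext x
  rw [sigmoid, Real.sigmoid_def, one_div]

lemma hasDerivAt_sigmoid (x : ℝ) : HasDerivAt sigmoid (sigmoid x * (1 - sigmoid x)) x := by
  rw [sigmoid_eq_real_sigmoid]
  exact Real.hasDerivAt_sigmoid x

lemma HasDerivAt.comp_hasGradientAt {F : Type*} [NormedAddCommGroup F] [InnerProductSpace ℝ F]
    [CompleteSpace F] {g : ℝ → ℝ} {g' : ℝ} {f : F → ℝ} {f' : F} {x : F}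
    (hg : HasDerivAt g g' (f x)) (hf : HasGradientAt f f' x) :
    HasGradientAt (g ∘ f) (g' • f') x := by
  rw [hasGradientAt_iff_hasFDerivAt, map_smul]
  exact hg.comp_hasFDerivAt x hf.hasFDerivAt

theorem revSigmoid_correct (k : ℕ) (f : EuclideanSpace ℝ (Fin k) → ℝ)
    (hf : Differentiable ℝ f) (v : EuclideanSpace ℝ (Fin k)) :
    revSigmoid k (f v, fun y => y • gradient f v) =
      (sigmoid (f v), fun y => y • gradient (fun w => sigmoid (f w)) v) := by
  have hgrad : gradient (fun w => sigmoid (f w)) v =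
      (sigmoid (f v) * (1 - sigmoid (f v))) • gradient f v :=
    ((hasDerivAt_sigmoid (f v)).comp_hasGradientAt (hf v).hasGradientAt).gradient
  refine Prod.ext rfl (funext fun y => ?_)
  simp only [revSigmoid, hgrad, smul_smul, mul_comm]
end

section
/- Let E and E′ be finite-dimensional real normed vector spaces, and let M and M′ be smooth (C^∞) manifolds without boundary modeled on E and E′ respectively. Then there is a diffeomorphism between the tangent bundle of the product manifold M × M′ and the product of the tangent bundles, TangentBundle (M × M′) ≃ TangentBundle M × TangentBundle M′, which over each point (x, x′) restricts to the canonical linear identification of tangent spaces T_{(x,x′)}(M × M′) ≅ T_x M × T_{x′} M′. -/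
/-!
The map `T(M × M') → TM × TM'` is `(T pr₁, T pr₂)`, smooth as a pair of tangent maps of
smooth maps. Its inverse is smooth because, read in the bundle charts, its fibre component is the
tangent coordinate change of `M × M'`; the charts of a product are products of charts, so this
coordinate change is the product of the coordinate changes of `M` and `M'`.
-/

open scoped Manifold ContDiff
open Bundle Set

section

variable {𝕜 : Type*} [NontriviallyNormedField 𝕜]
  {E : Type*} [NormedAddCommGroup E] [NormedSpace 𝕜 E] {H : Type*} [TopologicalSpace H]
  {E' : Type*} [NormedAddCommGroup E'] [NormedSpace 𝕜 E'] {H' : Type*} [TopologicalSpace H']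
  {I : ModelWithCorners 𝕜 E H} {I' : ModelWithCorners 𝕜 E' H'}
  {M : Type*} [TopologicalSpace M] [ChartedSpace H M]
  {M' : Type*} [TopologicalSpace M'] [ChartedSpace H' M']

theorem tangentCoordChange_prod [IsManifold I 1 M] [IsManifold I' 1 M']
    {x y z : M} {x' y' z' : M'}
    (hz : z ∈ (extChartAt I x).source ∩ (extChartAt I y).source)
    (hz' : z' ∈ (extChartAt I' x').source ∩ (extChartAt I' y').source) :
    tangentCoordChange (I.prod I') (x, x') (y, y') (z, z') =
      (tangentCoordChange I x y z).prodMap (tangentCoordChange I' x' y' z') := by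
  have h := HasFDerivWithinAt.prodMap (s := range I ×ˢ range I')
    (p := (extChartAt I x z, extChartAt I' x' z'))
    ((hasFDerivWithinAt_tangentCoordChange hz).mono (fst_image_prod_subset _ _))
    ((hasFDerivWithinAt_tangentCoordChange hz').mono (snd_image_prod_subset _ _))
  rw [← ModelWithCorners.range_prod] at h
  rw [tangentCoordChange_def]
  exact h.fderivWithin
    ((I.prod I').uniqueDiffWithinAt_image (x := (chartAt H x z, chartAt H' x' z')))

variable (I I' M M') in
def tangentBundleProdEquiv :
    TangentBundle (I.prod I') (M × M') ≃ TangentBundle I M × TangentBundle I' M' where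
  toFun p := (⟨p.proj.1, p.2.1⟩, ⟨p.proj.2, p.2.2⟩)
  invFun q := ⟨(q.1.proj, q.2.proj), (q.1.2, q.2.2)⟩
  left_inv _ := rfl
  right_inv _ := rfl

variable [IsManifold I ∞ M] [IsManifold I' ∞ M']

theorem TangentBundle.contMDiffAt_trivializationAt_snd (p : TangentBundle I M) :
    ContMDiffAt I.tangent 𝓘(𝕜, E) ∞
      (fun q : TangentBundle I M ↦ (trivializationAt E (TangentSpace I) p.proj q).2) p :=
  (contMDiffAt_totalSpace.mp contMDiffAt_id).2

theorem contMDiff_tangentBundleProdEquiv :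
    ContMDiff (I.prod I').tangent (I.tangent.prod I'.tangent) ∞
      (tangentBundleProdEquiv I I' M M') := by
  have hfst := (contMDiff_fst (I := I) (J := I') (M := M) (N := M')).contMDiff_tangentMap
    (m := ∞) le_rfl
  have hsnd := (contMDiff_snd (I := I) (J := I') (M := M) (N := M')).contMDiff_tangentMap
    (m := ∞) le_rfl
  refine (hfst.prodMk hsnd).congr fun p ↦ ?_
  rw [tangentMap_prodFst, tangentMap_prodSnd]
  rfl

theorem contMDiff_tangentBundleProdEquiv_symm :
    ContMDiff (I.tangent.prod I'.tangent) (I.prod I').tangent ∞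
      (tangentBundleProdEquiv I I' M M').symm := by
  intro q₀
  rw [contMDiffAt_totalSpace]
  refine ⟨(contMDiff_proj _).prodMap (contMDiff_proj _) q₀, ?_⟩
  have hcoord := (TangentBundle.contMDiffAt_trivializationAt_snd q₀.1).comp q₀ contMDiffAt_fst
    |>.prodMk_space
      ((TangentBundle.contMDiffAt_trivializationAt_snd q₀.2).comp q₀ contMDiffAt_snd)
  refine hcoord.congr_of_eventuallyEq ?_
  have hchart : ∀ᶠ q in nhds q₀, q.1.proj ∈ (extChartAt I q₀.1.proj).source ∧
      q.2.proj ∈ (extChartAt I' q₀.2.proj).source :=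
    ((FiberBundle.continuous_proj E _).prodMap (FiberBundle.continuous_proj E' _)).continuousAt
      |>.preimage_mem_nhds (prod_mem_nhds (extChartAt_source_mem_nhds _)
        (extChartAt_source_mem_nhds _))
  filter_upwards [hchart] with q hq
  -- over `z`, `trivializationAt _ _ y` acts definitionally as `tangentCoordChange _ z y z`
  exact congr($(tangentCoordChange_prod ⟨mem_extChartAt_source _, hq.1⟩
    ⟨mem_extChartAt_source _, hq.2⟩) (q.1.2, q.2.2))

variable (I I' M M') in
def tangentBundleProdDiffeomorph :
    Diffeomorph (I.prod I').tangent (I.tangent.prod I'.tangent)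
      (TangentBundle (I.prod I') (M × M')) (TangentBundle I M × TangentBundle I' M') ∞ where
  toEquiv := tangentBundleProdEquiv I I' M M'
  contMDiff_toFun := contMDiff_tangentBundleProdEquiv
  contMDiff_invFun := contMDiff_tangentBundleProdEquiv_symm

end

theorem tangentBundle_prod_diffeomorph_general
    {E : Type*} [NormedAddCommGroup E] [NormedSpace ℝ E]
    {E' : Type*} [NormedAddCommGroup E'] [NormedSpace ℝ E']
    {M : Type*} [TopologicalSpace M] [ChartedSpace E M]
    [IsManifold (𝓘(ℝ, E)) (⊤ : ℕ∞) M]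
    {M' : Type*} [TopologicalSpace M'] [ChartedSpace E' M']
    [IsManifold (𝓘(ℝ, E')) (⊤ : ℕ∞) M'] :
    ∃ Φ : Diffeomorph ((𝓘(ℝ, E)).prod (𝓘(ℝ, E'))).tangent
        ((𝓘(ℝ, E)).tangent.prod ((𝓘(ℝ, E')).tangent))
        (TangentBundle ((𝓘(ℝ, E)).prod (𝓘(ℝ, E'))) (M × M'))
        (TangentBundle (𝓘(ℝ, E)) M × TangentBundle (𝓘(ℝ, E')) M') (⊤ : ℕ∞),
      ∀ (x : M) (x' : M') (v : E) (v' : E'),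
        Φ ⟨(x, x'), (v, v')⟩ = (⟨x, v⟩, ⟨x', v'⟩) :=
  ⟨tangentBundleProdDiffeomorph 𝓘(ℝ, E) 𝓘(ℝ, E') M M', fun _ _ _ _ ↦ rfl⟩

theorem tangentBundle_prod_diffeomorph
    {E : Type*} [NormedAddCommGroup E] [NormedSpace ℝ E] [FiniteDimensional ℝ E]
    {E' : Type*} [NormedAddCommGroup E'] [NormedSpace ℝ E'] [FiniteDimensional ℝ E']
    {M : Type*} [TopologicalSpace M] [ChartedSpace E M]
    [IsManifold (𝓘(ℝ, E)) (⊤ : ℕ∞) M] [BoundarylessManifold (𝓘(ℝ, E)) M]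
    {M' : Type*} [TopologicalSpace M'] [ChartedSpace E' M']
    [IsManifold (𝓘(ℝ, E')) (⊤ : ℕ∞) M'] [BoundarylessManifold (𝓘(ℝ, E')) M'] :
    ∃ Φ : Diffeomorph ((𝓘(ℝ, E)).prod (𝓘(ℝ, E'))).tangent
        ((𝓘(ℝ, E)).tangent.prod ((𝓘(ℝ, E')).tangent))
        (TangentBundle ((𝓘(ℝ, E)).prod (𝓘(ℝ, E'))) (M × M'))
        (TangentBundle (𝓘(ℝ, E)) M × TangentBundle (𝓘(ℝ, E')) M') (⊤ : ℕ∞),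
      ∀ (x : M) (x' : M') (v : E) (v' : E'),
        Φ ⟨(x, x'), (v, v')⟩ = (⟨x, v⟩, ⟨x', v'⟩) :=
  tangentBundle_prod_diffeomorph_general
end
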